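/- arXiv:2601.16880 — 4 statements merged into one kernel-verified Lean document; each statement's English description precedes it below -/
import Mathlib

section
/- Let R ∈ ℝ^{q×s} have an SVD datum (σ, u, v) of rank r, and let k ≤ r. Let M ∈ ℝ^{n×s} satisfy the rank-k target restriction M = M · (Σ_{i<k} vᵢ vᵢᵀ), i.e. the rows of M lie in the span of v₀,…,v_{k−1}. Then the matrix X* := Σ_{i<k} σᵢ⁻¹ (M vᵢ) uᵢᵀ ∈ ℝ^{n×q} satisfies X* R = M, and for every X ∈ ℝ^{n×q} with X R = M one has ‖X*‖_F ≤ ‖X‖_F. (Rank-k truncated-pseudoinverse form of the minimal perturbation under the target restriction.) -/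
open Matrix

/-! Every solution `X` of `X R = M` satisfies `X uᵢ = σᵢ⁻¹ M vᵢ`, so the candidate is `X P` for
the orthogonal projection `P = Σ_{i<k} uᵢ uᵢᵀ`, and right multiplication by an orthogonal
projection does not increase the Frobenius norm: `X Xᵀ = (XP)(XP)ᵀ + (X(1-P))(X(1-P))ᵀ`.
That the candidate solves `X R = M` is the computation `uᵢᵀ R = σᵢ vᵢᵀ` together with the
target restriction `M = M Σ_{i<k} vᵢ vᵢᵀ`. -/

/-- Frobenius norm of a real matrix. -/
noncomputable def frobNorm {n q : ℕ} (A : Matrix (Fin n) (Fin q) ℝ) : ℝ :=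
  Real.sqrt (∑ i, ∑ j, (A i j) ^ 2)

section Orthonormal

variable {ι m n α : Type*} [DecidableEq ι]

theorem sum_smul_vecMulVec_mulVec [CommSemiring α] [Fintype ι] [Fintype n] (σ : ι → α)
    (u : ι → m → α) (v : ι → n → α) (hv : ∀ i j, v i ⬝ᵥ v j = if i = j then (1 : α) else 0)
    (j : ι) :
    (∑ i, σ i • vecMulVec (u i) (v i)) *ᵥ v j = σ j • u j := by
  simp [sum_mulVec, smul_mulVec, vecMulVec_mulVec, hv, ite_smul]

theorem vecMul_sum_smul_vecMulVec [CommSemiring α] [Fintype ι] [Fintype m] (σ : ι → α)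
    (u : ι → m → α) (v : ι → n → α) (hu : ∀ i j, u i ⬝ᵥ u j = if i = j then (1 : α) else 0)
    (j : ι) :
    u j ᵥ* (∑ i, σ i • vecMulVec (u i) (v i)) = σ j • v j := by
  simp [vecMul_sum, vecMul_smul, vecMul_vecMulVec, hu, ite_smul]

theorem sum_vecMulVec_self_mul_self [CommSemiring α] [Fintype m] (u : ι → m → α)
    (hu : ∀ i j, u i ⬝ᵥ u j = if i = j then (1 : α) else 0) (S : Finset ι) :
    (∑ i ∈ S, vecMulVec (u i) (u i)) * ∑ i ∈ S, vecMulVec (u i) (u i) =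
      ∑ i ∈ S, vecMulVec (u i) (u i) := by
  simp [Finset.sum_mul_sum, vecMulVec_mul_vecMulVec, hu, ite_smul, apply_ite (vecMulVec _)]

variable [Fintype ι] [Field α] [Fintype m] [Fintype n] {l : Type*}
  {σ : ι → α} {u : ι → m → α} {v : ι → n → α} (S : Finset ι)

theorem sum_inv_smul_vecMulVec_mul_sum_smul_vecMulVec (hσ : ∀ i, σ i ≠ 0)
    (hu : ∀ i j, u i ⬝ᵥ u j = if i = j then (1 : α) else 0) (M : Matrix l n α) :
    (∑ i ∈ S, (σ i)⁻¹ • vecMulVec (M *ᵥ v i) (u i)) * ∑ i, σ i • vecMulVec (u i) (v i) =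
      M * ∑ i ∈ S, vecMulVec (v i) (v i) := by
  rw [Matrix.sum_mul, Matrix.mul_sum]
  refine Finset.sum_congr rfl fun i _ => ?_
  rw [smul_mul, vecMulVec_mul, vecMul_sum_smul_vecMulVec σ u v hu, vecMulVec_smul, smul_smul,
    inv_mul_cancel₀ (hσ i), one_smul, mul_vecMulVec]

theorem sum_inv_smul_vecMulVec_eq_mul_of_mul_eq (hσ : ∀ i, σ i ≠ 0)
    (hv : ∀ i j, v i ⬝ᵥ v j = if i = j then (1 : α) else 0) {M : Matrix l n α}
    {X : Matrix l m α} (hX : X * ∑ i, σ i • vecMulVec (u i) (v i) = M) :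
    ∑ i ∈ S, (σ i)⁻¹ • vecMulVec (M *ᵥ v i) (u i) = X * ∑ i ∈ S, vecMulVec (u i) (u i) := by
  rw [Matrix.mul_sum]
  refine Finset.sum_congr rfl fun i _ => ?_
  rw [← hX, ← mulVec_mulVec, sum_smul_vecMulVec_mulVec σ u v hv, mulVec_smul, smul_vecMulVec,
    smul_smul, inv_mul_cancel₀ (hσ i), one_smul, mul_vecMulVec]

end Orthonormal

theorem sum_sq_eq_trace_mul_transpose {m n α : Type*} [Fintype m] [Fintype n] [CommSemiring α]
    (A : Matrix m n α) :
    ∑ i, ∑ j, A i j ^ 2 = trace (A * Aᵀ) := by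
  simp [trace, mul_apply, sq]

theorem frobNorm_mul_le_of_transpose_eq_of_mul_self_eq {n q : ℕ} (X : Matrix (Fin n) (Fin q) ℝ)
    {P : Matrix (Fin q) (Fin q) ℝ} (hPt : Pᵀ = P) (hPP : P * P = P) :
    frobNorm (X * P) ≤ frobNorm X := by
  have hsplit : X * Xᵀ = X * P * (X * P)ᵀ + X * (1 - P) * (X * (1 - P))ᵀ := by
    simp only [transpose_mul, transpose_sub, hPt, Matrix.mul_assoc,
      ← Matrix.mul_assoc P, hPP, Matrix.mul_sub, Matrix.sub_mul, Matrix.mul_one]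
    abel
  apply Real.sqrt_le_sqrt
  rw [sum_sq_eq_trace_mul_transpose, sum_sq_eq_trace_mul_transpose, hsplit, trace_add,
    ← sum_sq_eq_trace_mul_transpose (X * (1 - P))]
  exact le_add_of_nonneg_right (by positivity)

theorem truncated_pseudoinverse_minimal_general {q s n r : ℕ}
    (R : Matrix (Fin q) (Fin s) ℝ)
    (σ : Fin r → ℝ) (hσ : ∀ i, 0 < σ i)
    (u : Fin r → Fin q → ℝ) (v : Fin r → Fin s → ℝ)
    (hu : ∀ i j, u i ⬝ᵥ u j = if i = j then (1 : ℝ) else 0)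
    (hv : ∀ i j, v i ⬝ᵥ v j = if i = j then (1 : ℝ) else 0)
    (hR : R = ∑ i, σ i • vecMulVec (u i) (v i))
    (k : ℕ)
    (M : Matrix (Fin n) (Fin s) ℝ)
    (hM : M = M * ∑ i ∈ Finset.univ.filter (fun i : Fin r => (i : ℕ) < k),
        vecMulVec (v i) (v i)) :
    (∑ i ∈ Finset.univ.filter (fun i : Fin r => (i : ℕ) < k),
        (σ i)⁻¹ • vecMulVec (M.mulVec (v i)) (u i)) * R = M ∧
      ∀ X : Matrix (Fin n) (Fin q) ℝ, X * R = M →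
        frobNorm (∑ i ∈ Finset.univ.filter (fun i : Fin r => (i : ℕ) < k),
          (σ i)⁻¹ • vecMulVec (M.mulVec (v i)) (u i)) ≤ frobNorm X := by
  have hσ0 : ∀ i, σ i ≠ 0 := fun i => (hσ i).ne'
  subst hR
  refine ⟨by rw [sum_inv_smul_vecMulVec_mul_sum_smul_vecMulVec _ hσ0 hu, ← hM], fun X hX => ?_⟩
  rw [sum_inv_smul_vecMulVec_eq_mul_of_mul_eq _ hσ0 hv hX]
  exact frobNorm_mul_le_of_transpose_eq_of_mul_self_eq X
    (by simp [transpose_sum, transpose_vecMulVec]) (sum_vecMulVec_self_mul_self u hu _)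

/-- Rank-`k` truncated-pseudoinverse form of the minimal perturbation under the
rank-`k` target restriction: if `R = Σ_{i<r} σᵢ uᵢ vᵢᵀ` is an SVD of rank `r`,
`k ≤ r`, and the rows of `M` lie in the span of `v₀,…,v_{k-1}`, then
`X* = Σ_{i<k} σᵢ⁻¹ (M vᵢ) uᵢᵀ` satisfies `X* R = M` and has minimal Frobenius
norm among all solutions of `X R = M`. -/
theorem truncated_pseudoinverse_minimal {q s n r : ℕ}
    (R : Matrix (Fin q) (Fin s) ℝ)
    (σ : Fin r → ℝ) (hσ : ∀ i, 0 < σ i)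
    (u : Fin r → Fin q → ℝ) (v : Fin r → Fin s → ℝ)
    (hu : ∀ i j, u i ⬝ᵥ u j = if i = j then (1 : ℝ) else 0)
    (hv : ∀ i j, v i ⬝ᵥ v j = if i = j then (1 : ℝ) else 0)
    (hR : R = ∑ i, σ i • vecMulVec (u i) (v i))
    (k : ℕ) (hk : k ≤ r)
    (M : Matrix (Fin n) (Fin s) ℝ)
    (hM : M = M * ∑ i ∈ Finset.univ.filter (fun i : Fin r => (i : ℕ) < k),
        vecMulVec (v i) (v i)) :
    (∑ i ∈ Finset.univ.filter (fun i : Fin r => (i : ℕ) < k),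
        (σ i)⁻¹ • vecMulVec (M.mulVec (v i)) (u i)) * R = M ∧
      ∀ X : Matrix (Fin n) (Fin q) ℝ, X * R = M →
        frobNorm (∑ i ∈ Finset.univ.filter (fun i : Fin r => (i : ℕ) < k),
          (σ i)⁻¹ • vecMulVec (M.mulVec (v i)) (u i)) ≤ frobNorm X :=
  truncated_pseudoinverse_minimal_general R σ hσ u v hu hv hR k M hM
end

section
/- Let p ≥ 1 be a real number, c ≥ 2, T ≥ 1, and let h : ℝ^T → ℝ^c satisfy ‖h(θ₁) − h(θ₂)‖_p ≤ L_θ ‖θ₁ − θ₂‖_p for all θ₁, θ₂ ∈ ℝ^T, where ‖·‖_p denotes the ℓ_p norm and L_θ ≥ 0. Fix θ, θ̂ ∈ ℝ^T and a class index t; let γ := h(θ)_t − max_{i≠t} h(θ)_i be the classification margin at θ. If the parameter perturbation changes the predicted class away from t, i.e. there exists w ≠ t with h(θ̂)_w ≥ h(θ̂)_t, then γ ≤ 2^{(p−1)/p} · L_θ · ‖θ̂ − θ‖_p. (Margin–Lipschitz robustness bound for parameter perturbations.) -/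
/-- The ℓ_p norm of a finite real vector, for a real exponent `p`. -/
noncomputable def lpNorm {m : ℕ} (p : ℝ) (u : Fin m → ℝ) : ℝ :=
  (∑ i, |u i| ^ p) ^ (1 / p)

/-- The classification margin `y t - max_{i ≠ t} y i` (for `c ≥ 2` classes). -/
noncomputable def margin {c : ℕ} (hc : 2 ≤ c) (y : Fin c → ℝ) (t : Fin c) : ℝ :=
  y t - (Finset.univ.erase t).sup' (by
    rw [← Finset.card_pos, Finset.card_erase_of_mem (Finset.mem_univ t),
      Finset.card_univ, Fintype.card_fin]
    omega) y

lemma two_elem_rpow_bound {a b p : ℝ} (ha : 0 ≤ a) (hb : 0 ≤ b) (hp : 1 ≤ p) :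
    a + b ≤ (2 : ℝ) ^ ((p - 1) / p) * (a ^ p + b ^ p) ^ (1 / p) := by
  have hp0 : 0 < p := lt_of_lt_of_le one_pos hp
  have key : (a + b) ^ p ≤ (2 : ℝ) ^ (p - 1) * (a ^ p + b ^ p) := by
    have := NNReal.rpow_add_le_mul_rpow_add_rpow a.toNNReal b.toNNReal hp
    have h2 := (NNReal.coe_le_coe).2 this
    push_cast at h2
    rwa [Real.coe_toNNReal a ha, Real.coe_toNNReal b hb] at h2
  have h3 : ((a + b) ^ p) ^ (1 / p) ≤ ((2 : ℝ) ^ (p - 1) * (a ^ p + b ^ p)) ^ (1 / p) :=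
    Real.rpow_le_rpow (Real.rpow_nonneg (by linarith) p) key (by positivity)
  rw [← Real.rpow_mul (by linarith), mul_one_div, div_self hp0.ne', Real.rpow_one] at h3
  rwa [Real.mul_rpow (by positivity) (by positivity),
    ← Real.rpow_mul (by norm_num), mul_one_div] at h3

lemma lpNorm_sub_comm {m : ℕ} (p : ℝ) (u v : Fin m → ℝ) :
    lpNorm p (u - v) = lpNorm p (v - u) := by
  unfold lpNorm
  congr 1
  apply Finset.sum_congr rfl
  intro i _
  simp [abs_sub_comm (u i) (v i)]

/-- Margin–Lipschitz robustness bound for parameter perturbations: if `h` is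
`L_θ`-Lipschitz in the ℓ_p norm and the perturbed parameters `θ̂` change the
predicted class away from `t`, then the margin at `θ` is at most
`2^{(p-1)/p} · L_θ · ‖θ̂ − θ‖_p`. -/
theorem margin_lipschitz_robustness {c T : ℕ} (hc : 2 ≤ c) (hT : 1 ≤ T)
    (p : ℝ) (hp : 1 ≤ p) (Lθ : ℝ) (hL : 0 ≤ Lθ)
    (h : (Fin T → ℝ) → (Fin c → ℝ))
    (hLip : ∀ θ₁ θ₂ : Fin T → ℝ, lpNorm p (h θ₁ - h θ₂) ≤ Lθ * lpNorm p (θ₁ - θ₂))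
    (θ θhat : Fin T → ℝ) (t : Fin c)
    (hflip : ∃ w, w ≠ t ∧ h θhat w ≥ h θhat t) :
    margin hc (h θ) t ≤ (2 : ℝ) ^ ((p - 1) / p) * Lθ * lpNorm p (θhat - θ) := by
  obtain ⟨w, hwt, hw⟩ := hflip
  have hp0 : 0 < p := lt_of_lt_of_le one_pos hp
  set Δ : Fin c → ℝ := h θ - h θhat with hΔ
  have hΔt : Δ t = h θ t - h θhat t := rfl
  have hΔw : Δ w = h θ w - h θhat w := rfl
  -- step 1
  have h1 : margin hc (h θ) t ≤ h θ t - h θ w := by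
    unfold margin
    have := Finset.le_sup' (h θ) (Finset.mem_erase.2 ⟨hwt, Finset.mem_univ w⟩)
    linarith
  -- step 2
  have h2 : h θ t - h θ w ≤ |Δ t| + |Δ w| := by
    have h2a : h θ t - h θ w ≤ Δ t + (- Δ w) := by rw [hΔt, hΔw]; linarith
    have := le_abs_self (Δ t)
    have := neg_le_abs (Δ w)
    linarith
  -- step 3
  have h3 : |Δ t| + |Δ w| ≤ (2 : ℝ) ^ ((p - 1) / p) * (|Δ t| ^ p + |Δ w| ^ p) ^ (1 / p) :=
    two_elem_rpow_bound (abs_nonneg _) (abs_nonneg _) hp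
  -- step 4 : sum over pair ≤ full sum
  have h4 : (|Δ t| ^ p + |Δ w| ^ p) ^ (1 / p) ≤ lpNorm p Δ := by
    unfold lpNorm
    apply Real.rpow_le_rpow (by positivity) _ (by positivity)
    have hsum : |Δ t| ^ p + |Δ w| ^ p = ∑ i ∈ ({t, w} : Finset (Fin c)), |Δ i| ^ p := by
      rw [Finset.sum_pair (Ne.symm hwt)]
    rw [hsum]
    apply Finset.sum_le_sum_of_subset_of_nonneg (Finset.subset_univ _)
    intro i _ _
    positivity
  -- step 5
  have h5 : lpNorm p Δ ≤ Lθ * lpNorm p (θhat - θ) := by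
    rw [lpNorm_sub_comm p θhat θ]
    exact hLip θ θhat
  have h2pos : (0 : ℝ) ≤ (2 : ℝ) ^ ((p - 1) / p) := Real.rpow_nonneg (by norm_num) _
  calc margin hc (h θ) t ≤ |Δ t| + |Δ w| := le_trans h1 h2
    _ ≤ (2 : ℝ) ^ ((p - 1) / p) * (|Δ t| ^ p + |Δ w| ^ p) ^ (1 / p) := h3
    _ ≤ (2 : ℝ) ^ ((p - 1) / p) * lpNorm p Δ := by
        exact mul_le_mul_of_nonneg_left h4 h2pos
    _ ≤ (2 : ℝ) ^ ((p - 1) / p) * (Lθ * lpNorm p (θhat - θ)) :=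
        mul_le_mul_of_nonneg_left h5 h2pos
    _ = (2 : ℝ) ^ ((p - 1) / p) * Lθ * lpNorm p (θhat - θ) := by ring
end

section
/- Let p ≥ 1 be a real number, c ≥ 2, and let y, ŷ ∈ ℝ^c. Fix a class index t and let γ := y_t − max_{i≠t} y_i. If there exists w ≠ t with ŷ_w ≥ ŷ_t, then γ ≤ 2^{(p−1)/p} · ‖ŷ − y‖_p. (Output-space margin bound: a change of predicted class requires an output perturbation of ℓ_p norm at least 2^{−(p−1)/p} times the margin.) -/
private lemma key_two (a b : ℝ) (ha : 0 ≤ a) (hb : 0 ≤ b) {p : ℝ} (hp : 1 ≤ p) :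
    a + b ≤ (2 : ℝ) ^ ((p - 1) / p) * (a ^ p + b ^ p) ^ (1 / p) := by
  have hp0 : (0 : ℝ) < p := lt_of_lt_of_le one_pos hp
  have hpow : (a + b) ^ p ≤ (2 : ℝ) ^ (p - 1) * (a ^ p + b ^ p) := by
    lift a to NNReal using ha
    lift b to NNReal using hb
    exact_mod_cast NNReal.rpow_add_le_mul_rpow_add_rpow a b hp
  have hab : 0 ≤ a + b := by positivity
  calc a + b = ((a + b) ^ p) ^ (1 / p) := by
        rw [← Real.rpow_mul hab, mul_one_div, div_self hp0.ne', Real.rpow_one]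
  _ ≤ ((2 : ℝ) ^ (p - 1) * (a ^ p + b ^ p)) ^ (1 / p) := by
        apply Real.rpow_le_rpow (by positivity) hpow (by positivity)
  _ = (2 : ℝ) ^ ((p - 1) / p) * (a ^ p + b ^ p) ^ (1 / p) := by
        rw [Real.mul_rpow (by positivity) (by positivity),
          ← Real.rpow_mul (by norm_num), mul_one_div]

/-- Output-space margin bound: a change of predicted class away from `t`
requires an output perturbation of ℓ_p norm at least `2^{-(p-1)/p}` times the
margin. -/
theorem output_margin_bound {c : ℕ} (hc : 2 ≤ c)
    (p : ℝ) (hp : 1 ≤ p)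
    (y yhat : Fin c → ℝ) (t : Fin c)
    (hflip : ∃ w, w ≠ t ∧ yhat w ≥ yhat t) :
    margin hc y t ≤ (2 : ℝ) ^ ((p - 1) / p) * lpNorm p (yhat - y) := by
  obtain ⟨w, hwt, hw⟩ := hflip
  have hp0 : (0 : ℝ) < p := lt_of_lt_of_le one_pos hp
  set d : Fin c → ℝ := yhat - y with hd
  have hmem : w ∈ Finset.univ.erase t := Finset.mem_erase.2 ⟨hwt, Finset.mem_univ w⟩
  have h1 : margin hc y t ≤ y t - y w := by
    unfold margin
    have := Finset.le_sup' y hmem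
    linarith
  have h2 : y t - y w ≤ |d w| + |d t| := by
    have : y t - y w = (yhat t - yhat w) + d w - d t := by simp only [hd, Pi.sub_apply]; ring
    have h3 : d w ≤ |d w| := le_abs_self _
    have h4 : -d t ≤ |d t| := neg_le_abs _
    linarith
  have h5 : |d w| + |d t| ≤ (2 : ℝ) ^ ((p - 1) / p) * (|d w| ^ p + |d t| ^ p) ^ (1 / p) := by
    exact key_two _ _ (abs_nonneg _) (abs_nonneg _) hp
  have h6 : |d w| ^ p + |d t| ^ p ≤ ∑ i, |d i| ^ p := by
    have hsub : ({w, t} : Finset (Fin c)) ⊆ Finset.univ := Finset.subset_univ _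
    have := Finset.sum_le_sum_of_subset_of_nonneg hsub
      (fun i _ _ => by positivity : ∀ i ∈ (Finset.univ : Finset (Fin c)),
        i ∉ ({w, t} : Finset (Fin c)) → 0 ≤ |d i| ^ p)
    rwa [Finset.sum_pair hwt] at this
  have h7 : (|d w| ^ p + |d t| ^ p) ^ (1 / p) ≤ (∑ i, |d i| ^ p) ^ (1 / p) :=
    Real.rpow_le_rpow (by positivity) h6 (by positivity)
  have h8 : (2 : ℝ) ^ ((p - 1) / p) * (|d w| ^ p + |d t| ^ p) ^ (1 / p)
      ≤ (2 : ℝ) ^ ((p - 1) / p) * (∑ i, |d i| ^ p) ^ (1 / p) := by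
    apply mul_le_mul_of_nonneg_left h7 (by positivity)
  unfold lpNorm
  linarith
end

section
/- Let c ≥ 2, let W ∈ ℝ^{c×d}, let z ∈ ℝ^d with z ≠ 0, set y := W z, and let ỹ ∈ ℝ^c. Fix a class index t and let γ := y_t − max_{i≠t} y_i. Define ΔW* := (ỹ − y) zᵀ / ‖z‖₂². If the target output changes the predicted class away from t, i.e. there exists w ≠ t with ỹ_w ≥ ỹ_t, then γ ≤ √2 · ‖z‖₂ · ‖ΔW*‖_F. (The exact minimal single-sample final-layer perturbation never violates the margin–Lipschitz robustness bound with p = 2, since the map W ↦ W z is ‖z‖₂-Lipschitz in the Frobenius norm.) -/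
open Matrix

noncomputable def euclNorm {m : ℕ} (u : Fin m → ℝ) : ℝ :=
  Real.sqrt (∑ i, (u i) ^ 2)

theorem euclNorm_pos {m : ℕ} {u : Fin m → ℝ} (hu : u ≠ 0) : 0 < euclNorm u := by
  obtain ⟨i, hi⟩ := Function.ne_iff.mp hu
  exact Real.sqrt_pos.mpr <| Finset.sum_pos' (fun j _ => sq_nonneg (u j))
    ⟨i, Finset.mem_univ i, sq_pos_of_ne_zero hi⟩

theorem frobNorm_smul {n q : ℕ} (a : ℝ) (A : Matrix (Fin n) (Fin q) ℝ) :
    frobNorm (a • A) = |a| * frobNorm A := by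
  have hsum : ∑ i, ∑ j, ((a • A) i j) ^ 2 = a ^ 2 * ∑ i, ∑ j, (A i j) ^ 2 := by
    simp only [Matrix.smul_apply, smul_eq_mul, mul_pow, Finset.mul_sum]
  rw [frobNorm, frobNorm, hsum, Real.sqrt_mul (sq_nonneg a), Real.sqrt_sq_eq_abs]

theorem frobNorm_vecMulVec {n q : ℕ} (u : Fin n → ℝ) (v : Fin q → ℝ) :
    frobNorm (vecMulVec u v) = euclNorm u * euclNorm v := by
  have hsum : ∑ i, ∑ j, (vecMulVec u v i j) ^ 2 = (∑ i, (u i) ^ 2) * ∑ j, (v j) ^ 2 := by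
    simp only [vecMulVec_apply, mul_pow, Finset.sum_mul_sum]
  rw [frobNorm, hsum, Real.sqrt_mul (Finset.sum_nonneg fun i _ => sq_nonneg (u i))]
  rfl

theorem euclNorm_mul_frobNorm_inv_sq_smul_vecMulVec {c d : ℕ} (u : Fin c → ℝ)
    {z : Fin d → ℝ} (hz : z ≠ 0) :
    euclNorm z * frobNorm ((euclNorm z ^ 2)⁻¹ • vecMulVec u z) = euclNorm u := by
  have hz₀ := (euclNorm_pos hz).ne'
  rw [frobNorm_smul, frobNorm_vecMulVec, abs_of_nonneg (by positivity)]
  field_simp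

theorem abs_add_abs_le_sqrt_two_mul_euclNorm {m : ℕ} (u : Fin m → ℝ) {i j : Fin m}
    (hij : i ≠ j) : |u i| + |u j| ≤ Real.sqrt 2 * euclNorm u := by
  have hpair : (u i) ^ 2 + (u j) ^ 2 ≤ ∑ k, (u k) ^ 2 := by
    rw [← Finset.sum_pair (f := fun k => u k ^ 2) hij]
    exact Finset.sum_le_sum_of_subset_of_nonneg (Finset.subset_univ _)
      fun k _ _ => sq_nonneg (u k)
  rw [euclNorm, ← Real.sqrt_mul zero_le_two]
  apply Real.le_sqrt_of_sq_le
  nlinarith [sq_nonneg (|u i| - |u j|), sq_abs (u i), sq_abs (u j)]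

theorem margin_le_sub {c : ℕ} (hc : 2 ≤ c) (y : Fin c → ℝ) {t w : Fin c} (hwt : w ≠ t) :
    margin hc y t ≤ y t - y w := by
  rw [margin, sub_le_sub_iff_left]
  exact Finset.le_sup' y (Finset.mem_erase.mpr ⟨hwt, Finset.mem_univ w⟩)

theorem margin_le_sqrt_two_mul_euclNorm_sub {c : ℕ} (hc : 2 ≤ c) (y ytil : Fin c → ℝ)
    {t w : Fin c} (hwt : w ≠ t) (hflip : ytil t ≤ ytil w) :
    margin hc y t ≤ Real.sqrt 2 * euclNorm (ytil - y) :=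
  calc margin hc y t ≤ y t - y w := margin_le_sub hc y hwt
    _ ≤ |(ytil - y) t| + |(ytil - y) w| := by
      simp only [Pi.sub_apply]
      linarith [neg_abs_le (ytil t - y t), le_abs_self (ytil w - y w)]
    _ ≤ Real.sqrt 2 * euclNorm (ytil - y) :=
      abs_add_abs_le_sqrt_two_mul_euclNorm _ hwt.symm

/-- The exact minimal single-sample final-layer perturbation
`ΔW* = (ỹ − y) zᵀ / ‖z‖₂²` never violates the margin–Lipschitz robustness bound
with `p = 2`: if the target output `ỹ` changes the predicted class away from
`t`, then `γ ≤ √2 · ‖z‖₂ · ‖ΔW*‖_F`. -/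
theorem single_sample_perturbation_respects_margin_bound {c d : ℕ} (hc : 2 ≤ c)
    (W : Matrix (Fin c) (Fin d) ℝ) (z : Fin d → ℝ) (hz : z ≠ 0)
    (ytil : Fin c → ℝ) (t : Fin c)
    (hflip : ∃ w, w ≠ t ∧ ytil w ≥ ytil t) :
    margin hc (W.mulVec z) t ≤
      Real.sqrt 2 * euclNorm z *
        frobNorm ((euclNorm z ^ 2)⁻¹ • vecMulVec (ytil - W.mulVec z) z) := by
  obtain ⟨w, hwt, hw⟩ := hflip
  rw [mul_assoc, euclNorm_mul_frobNorm_inv_sq_smul_vecMulVec _ hz]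
  exact margin_le_sqrt_two_mul_euclNorm_sub hc _ ytil hwt hw
end
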